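/- arXiv:2205.07183 — 2 statements merged into one kernel-verified Lean document; each statement's English description precedes it below -/
import Mathlib

section
/- Let Γ act as a convergence group on a compact metrizable space M with |M| ≥ 3. If the action is faithful, then Γ acts properly discontinuously on the space of distinct triples of M; in particular, point stabilizers of triples of distinct points are finite. -/
open Filter Topology

/-- `γ n` converges to the constant map `b` uniformly on compact subsets of `M \ {a}`. -/
def ConvUnifOn {Γ M : Type*} [Group Γ] [MetricSpace M] [MulAction Γ M]
    (γ : ℕ → Γ) (a b : M) : Prop :=
  ∀ K : Set M, IsCompact K → a ∉ K → ∀ ε : ℝ, 0 < ε →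
    ∀ᶠ n in atTop, ∀ x ∈ K, dist (γ n • x) b < ε

/-- `Γ` acts on `M` as a convergence group. -/
def IsConvergenceGroup (Γ M : Type*) [Group Γ] [MetricSpace M] [MulAction Γ M] : Prop :=
  ∀ γ : ℕ → Γ, Function.Injective γ →
    ∃ (a b : M) (φ : ℕ → ℕ), StrictMono φ ∧ ConvUnifOn (γ ∘ φ) a b

lemma convUnifOn_comp {Γ M : Type*} [Group Γ] [MetricSpace M] [MulAction Γ M]
    {δ : ℕ → Γ} {a b : M} (h : ConvUnifOn δ a b) {τ : ℕ → ℕ} (hτ : StrictMono τ) :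
    ConvUnifOn (δ ∘ τ) a b := by
  intro K hK haK ε hε
  exact (hτ.tendsto_atTop).eventually (h K hK haK ε hε)

lemma tendsto_of_convUnifOn {Γ M : Type*} [Group Γ] [MetricSpace M] [CompactSpace M]
    [MulAction Γ M] {δ : ℕ → Γ} {a b : M} (h : ConvUnifOn δ a b)
    {x : M} (hx : x ≠ a) {u : ℕ → M} (hu : Tendsto u atTop (𝓝 x)) :
    Tendsto (fun n => δ n • u n) atTop (𝓝 b) := by
  rw [Metric.tendsto_nhds]
  intro ε hε
  have hr : 0 < dist x a / 2 := by
    have := dist_pos.2 hx; linarith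
  have hKc : IsCompact (Metric.closedBall x (dist x a / 2)) :=
    Metric.isClosed_closedBall.isCompact
  have haK : a ∉ Metric.closedBall x (dist x a / 2) := by
    simp only [Metric.mem_closedBall, dist_comm a x]
    have := dist_pos.2 hx; intro hle; linarith
  have hev := h _ hKc haK ε hε
  have huev : ∀ᶠ n in atTop, u n ∈ Metric.closedBall x (dist x a / 2) := by
    have := hu (Metric.closedBall_mem_nhds x hr)
    exact this
  filter_upwards [hev, huev] with n h1 h2 using h1 _ h2

theorem stmt2 {Γ M : Type*} [Group Γ] [MetricSpace M] [CompactSpace M] [MulAction Γ M]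
    (hcont : ∀ g : Γ, Continuous fun x : M => g • x)
    (h3 : ∃ x y z : M, x ≠ y ∧ y ≠ z ∧ x ≠ z)
    (hconv : IsConvergenceGroup Γ M)
    (hfaith : ∀ g : Γ, (∀ x : M, g • x = x) → g = 1) :
    (∀ K : Set (M × M × M), IsCompact K →
      (∀ p ∈ K, p.1 ≠ p.2.1 ∧ p.2.1 ≠ p.2.2 ∧ p.1 ≠ p.2.2) →
      {g : Γ | ((fun p : M × M × M => g • p) '' K ∩ K).Nonempty}.Finite) ∧
    (∀ x y z : M, x ≠ y → y ≠ z → x ≠ z →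
      {g : Γ | g • x = x ∧ g • y = y ∧ g • z = z}.Finite) := by
  have part1 : ∀ K : Set (M × M × M), IsCompact K →
      (∀ p ∈ K, p.1 ≠ p.2.1 ∧ p.2.1 ≠ p.2.2 ∧ p.1 ≠ p.2.2) →
      {g : Γ | ((fun p : M × M × M => g • p) '' K ∩ K).Nonempty}.Finite := by
    intro K hK hKdist
    by_contra hinf
    have hinf' : {g : Γ | ((fun p : M × M × M => g • p) '' K ∩ K).Nonempty}.Infinite := hinf
    let e := hinf'.natEmbedding
    set γ : ℕ → Γ := fun n => (e n : Γ) with hγdef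
    have hγinj : Function.Injective γ := fun m n h => e.injective (Subtype.ext h)
    have hγmem : ∀ n, ∃ p ∈ K, γ n • p ∈ K := by
      intro n
      obtain ⟨q, ⟨p, hpK, hpq⟩, hqK⟩ := (e n).2
      refine ⟨p, hpK, ?_⟩
      have : γ n • p = q := hpq
      rw [this]; exact hqK
    choose p hpK hgpK using hγmem
    obtain ⟨a, b, φ, hφ, hcu⟩ := hconv γ hγinj
    obtain ⟨pL, hpLK, ψ, hψ, hp⟩ := hK.tendsto_subseq (fun n => hpK (φ n))
    obtain ⟨qL, hqLK, χ, hχ, hq⟩ := hK.tendsto_subseq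
      (fun n => hgpK (φ (ψ n)))
    set σ : ℕ → ℕ := fun n => φ (ψ (χ n)) with hσdef
    have hδ : ConvUnifOn (γ ∘ σ) a b := by
      have := convUnifOn_comp hcu (hψ.comp hχ)
      exact this
    have hpσ : Tendsto (fun n => p (σ n)) atTop (𝓝 pL) := hp.comp hχ.tendsto_atTop
    have hqσ : Tendsto (fun n => γ (σ n) • p (σ n)) atTop (𝓝 qL) := hq
    have key : ∀ π : M × M × M → M, Continuous π →
        (∀ (g : Γ) (r : M × M × M), π (g • r) = g • π r) → π pL ≠ a → π qL = b := by
      intro π hπc hπeq hne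
      have h1 : Tendsto (fun n => π (p (σ n))) atTop (𝓝 (π pL)) :=
        (hπc.tendsto _).comp hpσ
      have h2 : Tendsto (fun n => (γ ∘ σ) n • π (p (σ n))) atTop (𝓝 b) :=
        tendsto_of_convUnifOn hδ hne h1
      have h3' : Tendsto (fun n => π (γ (σ n) • p (σ n))) atTop (𝓝 (π qL)) :=
        (hπc.tendsto _).comp hqσ
      have : (fun n => π (γ (σ n) • p (σ n))) = fun n => (γ ∘ σ) n • π (p (σ n)) := by
        funext n; exact hπeq _ _
      rw [this] at h3'
      exact tendsto_nhds_unique h3' h2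
    obtain ⟨hp12, hp23, hp13⟩ := hKdist pL hpLK
    obtain ⟨hq12, hq23, hq13⟩ := hKdist qL hqLK
    have k1 : pL.1 ≠ a → qL.1 = b :=
      key (fun r => r.1) continuous_fst (fun g r => rfl)
    have k2 : pL.2.1 ≠ a → qL.2.1 = b :=
      key (fun r => r.2.1) (continuous_fst.comp continuous_snd) (fun g r => rfl)
    have k3 : pL.2.2 ≠ a → qL.2.2 = b :=
      key (fun r => r.2.2) (continuous_snd.comp continuous_snd) (fun g r => rfl)
    by_cases h1a : pL.1 = a
    · exact hq23 ((k2 (fun h => hp12 (h1a ▸ h ▸ rfl))).trans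
        (k3 (fun h => hp13 (h1a ▸ h ▸ rfl))).symm)
    · by_cases h2a : pL.2.1 = a
      · exact hq13 ((k1 h1a).trans (k3 (fun h => hp23 (h2a ▸ h ▸ rfl))).symm)
      · exact hq12 ((k1 h1a).trans (k2 h2a).symm)
  refine ⟨part1, ?_⟩
  intro x y z hxy hyz hxz
  have hsing := part1 {(x, y, z)} isCompact_singleton
    (by rintro p rfl; exact ⟨hxy, hyz, hxz⟩)
  refine (hsing.subset ?_)
  rintro g ⟨hgx, hgy, hgz⟩
  refine ⟨(x, y, z), ⟨(x, y, z), rfl, ?_⟩, rfl⟩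
  show (g • x, g • y, g • z) = (x, y, z)
  rw [hgx, hgy, hgz]
end

section
/- Let ρ: Γ → G be a group homomorphism into a topological group G acting on a compact metrizable space M, and suppose there is a closed ρ(Γ)-invariant set Λ ⊆ M and a continuous ρ-equivariant surjective map φ: Λ → B extending the convergence action of Γ on a compact space B with at least 3 points on which Γ acts as a convergence group. If the Γ-action on B has infinite orbits, then the kernel of ρ is finite. -/
open Filter Topology

/-- Topological version: `γ n • x → b` uniformly on compact subsets of `B \ {a}`. -/
def TopConvSeq {Γ B : Type*} [Group Γ] [TopologicalSpace B] [MulAction Γ B]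
    (γ : ℕ → Γ) (a b : B) : Prop :=
  ∀ K : Set B, IsCompact K → a ∉ K → ∀ U : Set B, IsOpen U → b ∈ U →
    ∀ᶠ n in atTop, ∀ x ∈ K, γ n • x ∈ U

/-- `Γ` acts on `B` as a convergence group (topological formulation). -/
def IsTopConvergenceGroup (Γ B : Type*) [Group Γ] [TopologicalSpace B] [MulAction Γ B] : Prop :=
  ∀ γ : ℕ → Γ, Function.Injective γ →
    ∃ (a b : B) (φ : ℕ → ℕ), StrictMono φ ∧ TopConvSeq (γ ∘ φ) a b

/-- `γ n → z₊` and `(γ n)⁻¹ → z₋` with convergence group dynamics on `B`. -/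
def ConvPair {Γ B : Type*} [Group Γ] [TopologicalSpace B] [MulAction Γ B]
    (γ : ℕ → Γ) (zp zm : B) : Prop :=
  TopConvSeq γ zm zp ∧ TopConvSeq (fun n => (γ n)⁻¹) zp zm

theorem stmt4 {Γ G M B : Type*} [Group Γ] [Group G]
    [TopologicalSpace G] [IsTopologicalGroup G]
    [MetricSpace M] [CompactSpace M] [MulAction G M]
    [TopologicalSpace B] [CompactSpace B] [T2Space B] [MulAction Γ B]
    (ρ : Γ →* G)
    (hcontM : ∀ g : G, Continuous fun x : M => g • x)
    (hcontB : ∀ g : Γ, Continuous fun z : B => g • z)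
    (h3 : ∃ x y z : B, x ≠ y ∧ y ≠ z ∧ x ≠ z)
    (hconvB : IsTopConvergenceGroup Γ B)
    (Λ : Set M) (hΛc : IsClosed Λ) (hΛinv : ∀ g : Γ, ∀ x ∈ Λ, ρ g • x ∈ Λ)
    (φ : M → B) (hφcont : ContinuousOn φ Λ)
    (hφeq : ∀ g : Γ, ∀ x ∈ Λ, φ (ρ g • x) = g • φ x)
    (hφsurj : φ '' Λ = Set.univ)
    (C : B → Set M) (hCopen : ∀ z, IsOpen (C z))
    (hCsub : ∀ z, Λ \ {x ∈ Λ | φ x = z} ⊆ C z)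
    (hext : ∀ (γ : ℕ → Γ) (zp zm : B), ConvPair γ zp zm →
      ∀ K : Set M, IsCompact K → K ⊆ C zm →
        ∀ U : Set M, IsOpen U → {x ∈ Λ | φ x = zp} ⊆ U →
          ∀ᶠ n in atTop, ∀ x ∈ K, ρ (γ n) • x ∈ U)
    (horb : ∀ z : B, (Set.range fun g : Γ => g • z).Infinite) :
    {g : Γ | ρ g = 1}.Finite := by
  by_contra hS
  have hSinf : {g : Γ | ρ g = 1}.Infinite := hS
  -- kernel elements act trivially on B
  have htriv : ∀ g : Γ, ρ g = 1 → ∀ z : B, g • z = z := by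
    intro g hg z
    have hz : z ∈ φ '' Λ := by rw [hφsurj]; trivial
    obtain ⟨x, hx, rfl⟩ := hz
    have := hφeq g x hx
    rw [hg, one_smul] at this
    exact this.symm
  -- an injective sequence in the kernel
  set e := hSinf.natEmbedding with he
  set γ : ℕ → Γ := fun n => (e n : Γ) with hγ
  have hγinj : Function.Injective γ :=
    Subtype.val_injective.comp e.injective
  have hγker : ∀ n, ρ (γ n) = 1 := fun n => (e n).2
  obtain ⟨a, b, ψ, hψ, hconv⟩ := hconvB γ hγinj
  -- pick c ≠ a, c ≠ b
  obtain ⟨x, y, z, hxy, hyz, hxz⟩ := h3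
  obtain ⟨c, hca, hcb⟩ : ∃ c : B, c ≠ a ∧ c ≠ b := by
    by_cases hx1 : x ≠ a ∧ x ≠ b
    · exact ⟨x, hx1⟩
    by_cases hy1 : y ≠ a ∧ y ≠ b
    · exact ⟨y, hy1⟩
    by_cases hz1 : z ≠ a ∧ z ≠ b
    · exact ⟨z, hz1⟩
    push_neg at hx1 hy1 hz1
    by_cases hxa : x = a
    · by_cases hya : y = a
      · exact absurd (hxa.trans hya.symm) hxy
      · by_cases hza : z = a
        · exact absurd (hxa.trans hza.symm) hxz
        · exact absurd ((hy1 hya).trans (hz1 hza).symm) hyz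
    · by_cases hya : y = a
      · by_cases hza : z = a
        · exact absurd (hya.trans hza.symm) hyz
        · exact absurd ((hx1 hxa).trans (hz1 hza).symm) hxz
      · exact absurd ((hx1 hxa).trans (hy1 hya).symm) hxy
  -- apply convergence to K = {c}, U = {c}ᶜ
  have hU : IsOpen ({c}ᶜ : Set B) := isOpen_compl_singleton
  have hbU : b ∈ ({c}ᶜ : Set B) := fun h => hcb (Set.mem_singleton_iff.mp h).symm
  have haK : a ∉ ({c} : Set B) := fun h => hca (Set.mem_singleton_iff.mp h).symm
  have := hconv {c} isCompact_singleton haK {c}ᶜ hU hbU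
  obtain ⟨n, hn⟩ := this.exists
  have h1 := hn c rfl
  rw [show (γ ∘ ψ) n • c = c from htriv _ (hγker (ψ n)) c] at h1
  exact h1 rfl
end
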